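/- (Correctness of the Hopcroft–Ullman dynamic programming algorithm.) Let R be an extended regular expression over an alphabet Σ and let Q be a string over Σ of length n. Then for all indices i, j, the match relation satisfies M(R)(i, j) if and only if i ≤ j ≤ n and Q[i..j) ∈ L(R). -/

import Mathlib

open Computability

/-- Extended regular expressions over alphabet `α`. -/
inductive ERE (α : Type) : Type
  | eps : ERE α
  | char : α → ERE α
  | concat : ERE α → ERE α → ERE α
  | union : ERE α → ERE α → ERE α
  | inter : ERE α → ERE α → ERE α
  | compl : ERE α → ERE α
  | star : ERE α → ERE α

/-- The language generated by an extended regular expression. -/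
def ERE.lang {α : Type} : ERE α → Language α
  | .eps => 1
  | .char a => {[a]}
  | .concat S T => S.lang * T.lang
  | .union S T => S.lang + T.lang
  | .inter S T => S.lang ⊓ T.lang
  | .compl S => (Set.univ : Set (List α)) \ S.lang
  | .star S => S.lang∗

/-- The substring `Q[i..j)`. -/
def substr {α : Type} (Q : List α) (i j : ℕ) : List α := (Q.drop i).take (j - i)

/-- The match relation `M(R)(i,j)` of the Hopcroft–Ullman dynamic programming algorithm. -/
def ERE.M {α : Type} (Q : List α) : ERE α → ℕ → ℕ → Prop
  | .eps, i, j => i = j ∧ j ≤ Q.length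
  | .char a, i, j => j = i + 1 ∧ j ≤ Q.length ∧ Q[i]? = some a
  | .concat S T, i, j => ∃ l, S.M Q i l ∧ T.M Q l j
  | .union S T, i, j => S.M Q i j ∨ T.M Q i j
  | .inter S T, i, j => S.M Q i j ∧ T.M Q i j
  | .compl S, i, j => i ≤ j ∧ j ≤ Q.length ∧ ¬ S.M Q i j
  | .star S, i, j => i ≤ j ∧ j ≤ Q.length ∧ Relation.ReflTransGen (S.M Q) i j

/-!
The match relation of `R` is `Matches Q R.lang`, where `Matches Q L i j` says `i ≤ j ≤ |Q|` and
`Q[i..j) ∈ L`: each clause of `ERE.M` characterises `Matches` for the corresponding language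
operation, so this follows by structural induction on `R`. The substantial cases are
concatenation, where a factorisation `Q[i..j) = u ++ v` is read back as a split point
`l = i + |u|`, and star, where `L∗` is the least language containing `1` and closed under left
multiplication by `L`.
-/

section Substr

variable {α : Type} {Q : List α} {i j l : ℕ}

lemma substr_length (hij : i ≤ j) (hj : j ≤ Q.length) : (substr Q i j).length = j - i := by
  simp only [substr, List.length_take, List.length_drop]
  omega

lemma substr_eq_nil_iff : substr Q i j = [] ↔ j ≤ i ∨ Q.length ≤ i := by
  simp only [substr, List.take_eq_nil_iff, List.drop_eq_nil_iff]
  omega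

lemma substr_succ (hi : i < Q.length) : substr Q i (i + 1) = [Q[i]] := by
  rw [substr, Nat.add_sub_cancel_left, List.drop_eq_getElem_cons hi, List.take_succ_cons,
    List.take_zero]

lemma substr_append_substr (hil : i ≤ l) (hlj : l ≤ j) :
    substr Q i l ++ substr Q l j = substr Q i j := by
  rw [substr, substr, substr, show j - i = (l - i) + (j - l) by omega, List.take_add,
    List.drop_drop, show i + (l - i) = l by omega]

lemma exists_substr_eq_of_substr_eq_append {u v : List α} (hij : i ≤ j) (hj : j ≤ Q.length)
    (h : substr Q i j = u ++ v) :
    ∃ l, i ≤ l ∧ l ≤ j ∧ substr Q i l = u ∧ substr Q l j = v := by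
  have hlen := substr_length hij hj
  rw [h, List.length_append] at hlen
  have hsplit : substr Q i (i + u.length) ++ substr Q (i + u.length) j = u ++ v := by
    rw [substr_append_substr (by omega) (by omega), h]
  have hlen_u : (substr Q i (i + u.length)).length = u.length := by
    rw [substr_length (by omega) (by omega)]
    omega
  obtain ⟨hu, hv⟩ := List.append_inj hsplit hlen_u
  exact ⟨i + u.length, by omega, by omega, hu, hv⟩

end Substr

def Matches {α : Type} (Q : List α) (L : Language α) (i j : ℕ) : Prop :=
  i ≤ j ∧ j ≤ Q.length ∧ substr Q i j ∈ L

namespace Matches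

variable {α : Type} {Q : List α} {L K : Language α} {i j : ℕ}

lemma mono (hLK : L ≤ K) (h : Matches Q L i j) : Matches Q K i j :=
  ⟨h.1, h.2.1, hLK h.2.2⟩

lemma one_iff : Matches Q 1 i j ↔ i = j ∧ j ≤ Q.length := by
  simp only [Matches, Language.mem_one, substr_eq_nil_iff]
  omega

lemma singleton_iff {a : α} :
    Matches Q {[a]} i j ↔ j = i + 1 ∧ j ≤ Q.length ∧ Q[i]? = some a := by
  constructor
  · rintro ⟨hij, hj, h : substr Q i j = [a]⟩
    have hlen := substr_length hij hj
    rw [h, List.length_singleton] at hlen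
    obtain rfl : j = i + 1 := by omega
    have hi : i < Q.length := by omega
    rw [substr_succ hi, List.singleton_inj] at h
    exact ⟨rfl, hj, by rw [List.getElem?_eq_getElem hi, h]⟩
  · rintro ⟨rfl, hj, ha⟩
    obtain ⟨hi, rfl⟩ := List.getElem?_eq_some_iff.1 ha
    exact ⟨by omega, hj, substr_succ hi⟩

lemma mul_iff : Matches Q (L * K) i j ↔ ∃ l, Matches Q L i l ∧ Matches Q K l j := by
  constructor
  · rintro ⟨hij, hj, h⟩
    obtain ⟨u, hu, v, hv, huv⟩ := Language.mem_mul.1 h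
    obtain ⟨l, hil, hlj, rfl, rfl⟩ := exists_substr_eq_of_substr_eq_append hij hj huv.symm
    exact ⟨l, ⟨hil, by omega, hu⟩, ⟨hlj, hj, hv⟩⟩
  · rintro ⟨l, ⟨hil, -, hu⟩, ⟨hlj, hj, hv⟩⟩
    exact ⟨hil.trans hlj, hj, substr_append_substr hil hlj ▸ Language.append_mem_mul hu hv⟩

lemma add_iff : Matches Q (L + K) i j ↔ Matches Q L i j ∨ Matches Q K i j := by
  simp only [Matches, Language.mem_add]
  tauto

lemma inf_iff : Matches Q (L ⊓ K) i j ↔ Matches Q L i j ∧ Matches Q K i j := by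
  simp only [Matches, Language.mem_inf]
  tauto

lemma compl_iff :
    Matches Q ((Set.univ : Set (List α)) \ L) i j ↔
      i ≤ j ∧ j ≤ Q.length ∧ ¬ Matches Q L i j :=
  ⟨fun ⟨hij, hj, _, h⟩ => ⟨hij, hj, fun hm => h hm.2.2⟩,
    fun ⟨hij, hj, h⟩ => ⟨hij, hj, trivial, fun hm => h ⟨hij, hj, hm⟩⟩⟩

lemma reflTransGen_of_kstar (h : Matches Q L∗ i j) : Relation.ReflTransGen (Matches Q L) i j := by
  let chained : Language α :=
    {w | ∀ i j, Matches Q {w} i j → Relation.ReflTransGen (Matches Q L) i j}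
  have one_le_chained : 1 ≤ chained := by
    rintro w rfl i j hw
    obtain ⟨rfl, -⟩ := one_iff.1 (hw.mono (by rfl))
    exact .refl
  have mul_chained_le : L * chained ≤ chained := by
    rintro _ ⟨u, hu, v, hv, rfl⟩ i j ⟨hij, hj, huv⟩
    obtain ⟨l, hil, hlj, rfl, rfl⟩ := exists_substr_eq_of_substr_eq_append hij hj huv
    exact .head ⟨hil, by omega, hu⟩ (hv l j ⟨hlj, hj, rfl⟩)
  exact kstar_le_of_mul_le_right one_le_chained mul_chained_le h.2.2 i j ⟨h.1, h.2.1, rfl⟩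

lemma kstar_of_reflTransGen (hj : j ≤ Q.length) (h : Relation.ReflTransGen (Matches Q L) i j) :
    Matches Q L∗ i j := by
  induction h using Relation.ReflTransGen.head_induction_on with
  | refl => exact one_iff.2 ⟨rfl, hj⟩ |>.mono one_le_kstar
  | head hstep _ ih => exact (mul_iff.2 ⟨_, hstep, ih⟩).mono mul_kstar_le_kstar

lemma kstar_iff :
    Matches Q L∗ i j ↔ i ≤ j ∧ j ≤ Q.length ∧ Relation.ReflTransGen (Matches Q L) i j :=
  ⟨fun h => ⟨h.1, h.2.1, reflTransGen_of_kstar h⟩,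
    fun ⟨_, hj, h⟩ => kstar_of_reflTransGen hj h⟩

end Matches

lemma ERE.M_eq_matches {α : Type} (Q : List α) (R : ERE α) : R.M Q = Matches Q R.lang := by
  induction R with
  | eps => ext i j; exact Matches.one_iff.symm
  | char a => ext i j; exact Matches.singleton_iff.symm
  | concat S T ihS ihT => ext i j; rw [ERE.M, ERE.lang, Matches.mul_iff, ihS, ihT]
  | union S T ihS ihT => ext i j; rw [ERE.M, ERE.lang, Matches.add_iff, ihS, ihT]
  | inter S T ihS ihT => ext i j; rw [ERE.M, ERE.lang, Matches.inf_iff, ihS, ihT]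
  | compl S ihS => ext i j; rw [ERE.M, ERE.lang, Matches.compl_iff, ihS]
  | star S ihS => ext i j; rw [ERE.M, ERE.lang, Matches.kstar_iff, ihS]

/-- Correctness of the Hopcroft–Ullman dynamic programming algorithm: for every extended
regular expression `R` and string `Q` of length `n`, the match relation satisfies
`M(R)(i,j)` iff `i ≤ j ≤ n` and the substring `Q[i..j)` belongs to `L(R)`. -/
theorem dynamicProgramming_correct {α : Type} (R : ERE α) (Q : List α) (n : ℕ)
    (hn : n = Q.length) (i j : ℕ) :
    R.M Q i j ↔ i ≤ j ∧ j ≤ n ∧ substr Q i j ∈ R.lang := by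
  rw [hn, ERE.M_eq_matches]
  rfl
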